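/- For n ≥ 3, the number of permutations of length n that avoid the pattern 123 and contain exactly one occurrence of the pattern 132 is (n-2)·2^(n-3). -/

import Mathlib

/-!
Encode `π` by the code `c i = #{j > i | π i < π j}`. Its entry at `i` lies in `Fin (n - i)`, and
the code determines `π` (read the values off from left to right), so it is a bijection onto
`∏ i, Fin (n - i)`. If `π` avoids 123, any two positions `j < k` after `i` carrying larger values
form a 132 occurrence `(i, j, k)`. So `π` is counted exactly when one code entry, at `i₀` say,
equals 2, all others are at most 1, and the two larger values after `i₀` form a descent; the last
condition turns out to mean that position `i₀ + 1` is one of them and has code entry 0. Hence the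
counted codes have a 2 at some `i₀ < n - 2` and a 0 at `i₀ + 1`; the last entry is always 0, and
each of the other `n - 3` entries is 0 or 1.
-/

open Finset

lemma Finset.strictAntiOn_card_filter_lt {α : Type*} [LinearOrder α] (s : Finset α) :
    StrictAntiOn (fun a => #{v ∈ s | a < v}) s := by
  intro a _ b hb hab
  refine card_lt_card ((ssubset_iff_of_subset ?_).2 ⟨b, ?_, ?_⟩)
  · exact monotone_filter_right s fun _ _ => hab.trans
  · exact mem_filter.2 ⟨hb, hab⟩
  · simp

lemma Fin.card_filter_val_eq (m k : ℕ) :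
    #{x : Fin m | (x : ℕ) = k} = if k < m then 1 else 0 := by
  split_ifs with h
  · rw [card_eq_one]
    exact ⟨⟨k, h⟩, by ext x; simp [Fin.ext_iff]⟩
  · simp only [card_eq_zero, filter_eq_empty_iff]
    omega

namespace Equiv.Perm

variable {n : ℕ}

def largerAfter (π : Perm (Fin n)) (i : Fin n) : Finset (Fin n) := {j | i < j ∧ π i < π j}

def Contains123 (π : Perm (Fin n)) : Prop :=
  ∃ i j k : Fin n, i < j ∧ j < k ∧ π i < π j ∧ π j < π k

def IsOccurrence132 (π : Perm (Fin n)) (t : Fin n × Fin n × Fin n) : Prop :=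
  t.1 < t.2.1 ∧ t.2.1 < t.2.2 ∧ π t.1 < π t.2.2 ∧ π t.2.2 < π t.2.1

variable {π : Perm (Fin n)} {i j k : Fin n}

@[simp]
lemma mem_largerAfter : j ∈ largerAfter π i ↔ i < j ∧ π i < π j := by
  simp [largerAfter]

lemma card_largerAfter_lt : #(largerAfter π i) < n - i := by
  have : #(largerAfter π i) ≤ #(Ioi i) :=
    card_le_card fun j hj => mem_Ioi.2 (mem_largerAfter.1 hj).1
  rw [Fin.card_Ioi] at this
  omega

lemma card_largerAfter :
    #(largerAfter π i) = #{v ∈ ((Iio i).image π)ᶜ | π i < v} := by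
  refine card_nbij' π π.symm ?_ ?_ ?_ ?_
  · intro j hj
    simp only [SetLike.mem_coe, mem_largerAfter, coe_filter, mem_compl, mem_image, mem_Iio,
      not_exists, not_and, Set.mem_ofPred_eq, EmbeddingLike.apply_eq_iff_eq] at hj ⊢
    exact ⟨fun x hx hxj => (hxj ▸ hx).asymm hj.1, hj.2⟩
  · intro v hv
    simp only [coe_filter, mem_compl, mem_image, mem_Iio, not_exists, not_and,
      Set.mem_ofPred_eq, SetLike.mem_coe, mem_largerAfter, apply_symm_apply] at hv ⊢
    refine ⟨lt_of_not_ge fun h => ?_, hv.2⟩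
    rcases h.lt_or_eq with h | h
    · exact hv.1 _ h (π.apply_symm_apply v)
    · exact hv.2.ne (by rw [← h, π.apply_symm_apply])
  · intro j _
    simp
  · intro v _
    simp

/-- A variant of the Lehmer code, counting larger rather than smaller entries to the right. -/
def largerAfterCode (π : Perm (Fin n)) (i : Fin n) : Fin (n - i) :=
  ⟨#(largerAfter π i), card_largerAfter_lt⟩

lemma largerAfterCode_injective : Function.Injective (largerAfterCode (n := n)) := by
  intro π σ h
  ext1 i
  induction i using WellFoundedLT.induction with
  | _ i ih =>
  have hR : (Iio i).image π = (Iio i).image σ := image_congr fun j hj => ih j (by simpa using hj)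
  have hcard : #(largerAfter π i) = #(largerAfter σ i) := congrArg Fin.val (congrFun h i)
  rw [card_largerAfter, card_largerAfter, hR] at hcard
  refine (strictAntiOn_card_filter_lt _).injOn ?_ ?_ hcard
  · simp [← hR]
  · simp

lemma largerAfterCode_bijective : Function.Bijective (largerAfterCode (n := n)) := by
  refine (Fintype.bijective_iff_injective_and_card _).2 ⟨largerAfterCode_injective, ?_⟩
  simp only [Fintype.card_perm, Fintype.card_pi, Fintype.card_fin]
  rw [Fin.prod_univ_eq_prod_range (fun i => n - i), ← Nat.descFactorial_eq_prod_range,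
    Nat.descFactorial_self]

lemma mem_largerAfter_trans (hj : j ∈ largerAfter π i) (hk : k ∈ largerAfter π j) :
    k ∈ largerAfter π i := by
  rw [mem_largerAfter] at *
  exact ⟨hj.1.trans hk.1, hj.2.trans hk.2⟩

lemma mem_largerAfter_of_notMem (hij : i < j) (hj : j ∉ largerAfter π i) (hjk : j < k)
    (hk : k ∈ largerAfter π i) : k ∈ largerAfter π j := by
  rw [mem_largerAfter] at *
  have hji : π j < π i := (le_of_not_gt fun h => hj ⟨hij, h⟩).lt_of_ne (π.injective.ne hij.ne')
  exact ⟨hjk, hji.trans hk.2⟩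

lemma isOccurrence132_iff (h : ¬ Contains123 π) :
    IsOccurrence132 π (i, j, k) ↔ j < k ∧ j ∈ largerAfter π i ∧ k ∈ largerAfter π i := by
  simp only [IsOccurrence132, mem_largerAfter]
  constructor
  · rintro ⟨hij, hjk, hik, hkj⟩
    exact ⟨hjk, ⟨hij, hik.trans hkj⟩, hij.trans hjk, hik⟩
  · rintro ⟨hjk, ⟨hij, hj⟩, -, hk⟩
    refine ⟨hij, hjk, hk, ?_⟩
    exact (lt_or_gt_of_ne (π.injective.ne hjk.ne')).resolve_right
      fun hjk' => h ⟨i, j, k, hij, hjk, hj, hjk'⟩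

lemma not_contains123_and_existsUnique_iff :
    (¬ Contains123 π ∧ ∃! t, IsOccurrence132 π t) ↔
      ∃ i j k, j < k ∧ π k < π j ∧ largerAfter π i = {j, k} ∧
        ∀ x ≠ i, #(largerAfter π x) ≤ 1 := by
  constructor
  · rintro ⟨h123, ⟨i, j, k⟩, ht, huniq⟩
    have hpair : ∀ x a b, a < b → a ∈ largerAfter π x → b ∈ largerAfter π x →
        x = i ∧ a = j ∧ b = k := by
      intro x a b hab ha hb
      simpa [Prod.ext_iff] using huniq (x, a, b) ((isOccurrence132_iff h123).2 ⟨hab, ha, hb⟩)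
    obtain ⟨hjk, hj, hk⟩ := (isOccurrence132_iff h123).1 ht
    refine ⟨i, j, k, hjk, ht.2.2.2, ?_, fun x hx => card_le_one.2 fun a ha b hb => ?_⟩
    · refine Subset.antisymm (fun a ha => ?_) (insert_subset hj (singleton_subset_iff.2 hk))
      rcases lt_trichotomy a j with haj | rfl | hja
      · exact absurd (hpair i a j haj ha hj).2.1 haj.ne
      · simp
      · simp [(hpair i j a hja hj ha).2.2]
    · by_contra hab
      rcases lt_or_gt_of_ne hab with hab | hba
      · exact hx (hpair x a b hab ha hb).1
      · exact hx (hpair x b a hba hb ha).1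
  · rintro ⟨i, j, k, hjk, hkj, hi, hcard⟩
    have hpair : ∀ x a b, a < b → a ∈ largerAfter π x → b ∈ largerAfter π x →
        x = i ∧ a = j ∧ b = k := by
      intro x a b hab ha hb
      obtain rfl : x = i := by
        by_contra hx
        exact hab.ne (card_le_one.1 (hcard x hx) a ha b hb)
      rw [hi, mem_insert, mem_singleton] at ha hb
      refine ⟨rfl, ?_⟩
      rcases ha with rfl | rfl <;> rcases hb with rfl | rfl
      · exact absurd hab (lt_irrefl _)
      · exact ⟨rfl, rfl⟩
      · exact absurd hab hjk.asymm
      · exact absurd hab (lt_irrefl _)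
    have hj : j ∈ largerAfter π i := by simp [hi]
    have hk : k ∈ largerAfter π i := by simp [hi]
    refine ⟨fun ⟨x, y, z, hxy, hyz, hy, hz⟩ => ?_, ⟨(i, j, k), ?_, ?_⟩⟩
    · obtain ⟨-, rfl, rfl⟩ := hpair x y z hyz (mem_largerAfter.2 ⟨hxy, hy⟩)
        (mem_largerAfter.2 ⟨hxy.trans hyz, hy.trans hz⟩)
      exact hz.asymm hkj
    · exact ⟨(mem_largerAfter.1 hj).1, hjk, (mem_largerAfter.1 hk).2, hkj⟩
    · rintro ⟨x, y, z⟩ ⟨hxy, hyz, hxz, hzy⟩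
      obtain ⟨rfl, rfl, rfl⟩ := hpair x y z hyz (mem_largerAfter.2 ⟨hxy, hxz.trans hzy⟩)
        (mem_largerAfter.2 ⟨hxy.trans hyz, hxz⟩)
      rfl

lemma exists_succ_pair_subset_largerAfter (hi : largerAfter π i = {j, k}) (hjk : j < k)
    (hj : (j : ℕ) ≠ i + 1) : ∃ y : Fin n, (y : ℕ) = i + 1 ∧ {j, k} ⊆ largerAfter π y := by
  have hj' : j ∈ largerAfter π i := by simp [hi]
  have hk' : k ∈ largerAfter π i := by simp [hi]
  have hlt : (i : ℕ) + 1 < j := by have := (mem_largerAfter.1 hj').1; rw [Fin.lt_def] at this; omega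
  let y : Fin n := ⟨i + 1, by omega⟩
  have hiy : i < y := Fin.lt_def.2 (Nat.lt_succ_self _)
  have hyj : y < j := Fin.lt_def.2 hlt
  have hy : y ∉ largerAfter π i := by
    rw [hi]; simp [hyj.ne, (hyj.trans hjk).ne]
  refine ⟨y, rfl, insert_subset ?_ (singleton_subset_iff.2 ?_)⟩
  · exact mem_largerAfter_of_notMem hiy hy hyj hj'
  · exact mem_largerAfter_of_notMem hiy hy (hyj.trans hjk) hk'

lemma exists_largerAfter_eq_pair_iff :
    (∃ i j k, j < k ∧ π k < π j ∧ largerAfter π i = {j, k} ∧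
        ∀ x ≠ i, #(largerAfter π x) ≤ 1) ↔
      ∃ i, #(largerAfter π i) = 2 ∧ (∀ j : Fin n, (j : ℕ) = i + 1 → largerAfter π j = ∅) ∧
        ∀ x ≠ i, #(largerAfter π x) ≤ 1 := by
  constructor
  · rintro ⟨i, j, k, hjk, hkj, hi, hcard⟩
    have hj : j ∈ largerAfter π i := by simp [hi]
    have hsucc : (j : ℕ) = i + 1 := by
      by_contra hne
      obtain ⟨y, hy, hsub⟩ := exists_succ_pair_subset_largerAfter hi hjk hne
      have h2 := card_le_card hsub
      rw [card_pair hjk.ne] at h2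
      have := hcard y fun h => by rw [h] at hy; omega
      omega
    refine ⟨i, by rw [hi, card_pair hjk.ne], fun j' hj' => ?_, hcard⟩
    obtain rfl : j' = j := Fin.ext (hj'.trans hsucc.symm)
    refine eq_empty_of_forall_notMem fun y hy => ?_
    have hyi : y ∈ largerAfter π i := mem_largerAfter_trans hj hy
    rw [hi, mem_insert, mem_singleton] at hyi
    rcases hyi with rfl | rfl
    · exact lt_irrefl _ (mem_largerAfter.1 hy).1
    · exact (mem_largerAfter.1 hy).2.asymm hkj
  · rintro ⟨i, h2, hempty, hcard⟩
    obtain ⟨j, k, hjk, hi⟩ : ∃ j k, j < k ∧ largerAfter π i = {j, k} := by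
      obtain ⟨a, b, hne, h⟩ := card_eq_two.1 h2
      rcases lt_or_gt_of_ne hne with hab | hba
      · exact ⟨a, b, hab, h⟩
      · exact ⟨b, a, hba, h.trans (pair_comm a b)⟩
    have hj : largerAfter π j = ∅ := by
      refine hempty j (by_contra fun hne => ?_)
      obtain ⟨y, hy, hsub⟩ := exists_succ_pair_subset_largerAfter hi hjk hne
      simp [hempty y hy] at hsub
    refine ⟨i, j, k, hjk, ?_, hi, hcard⟩
    by_contra! hjk'
    have : k ∈ largerAfter π j := mem_largerAfter.2 ⟨hjk, hjk'.lt_of_ne (π.injective.ne hjk.ne)⟩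
    simp [hj] at this

def allowedEntries (i₀ : ℕ) (i : Fin n) : Finset (Fin (n - i)) :=
  if (i : ℕ) = i₀ then ({x | (x : ℕ) = 2} : Finset (Fin (n - i)))
  else if (i : ℕ) = i₀ + 1 then ({x | (x : ℕ) < 1} : Finset (Fin (n - i)))
  else ({x | (x : ℕ) < 2} : Finset (Fin (n - i)))

def goodCodes : Finset ((i : Fin n) → Fin (n - i)) :=
  univ.biUnion fun i₀ : Fin n => Fintype.piFinset (allowedEntries i₀)

lemma largerAfterCode_mem_piFinset_allowedEntries {i₀ : Fin n} :
    largerAfterCode π ∈ Fintype.piFinset (allowedEntries i₀) ↔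
      #(largerAfter π i₀) = 2 ∧ (∀ j : Fin n, (j : ℕ) = i₀ + 1 → largerAfter π j = ∅) ∧
        ∀ x ≠ i₀, #(largerAfter π x) ≤ 1 := by
  simp only [Fintype.mem_piFinset, allowedEntries, largerAfterCode]
  constructor
  · intro h
    refine ⟨by simpa using h i₀, fun j hj => ?_, fun x hx => ?_⟩
    · have := h j
      rw [if_neg (by omega), if_pos hj] at this
      simpa using this
    · have := h x
      rw [if_neg (Fin.val_ne_of_ne hx)] at this
      split_ifs at this <;> simp at this <;> simp [this]
  · rintro ⟨h2, h0, h1⟩ i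
    split_ifs with hi hi'
    · obtain rfl := Fin.ext hi; simpa using h2
    · simp [h0 i hi']
    · simpa [Nat.lt_succ_iff] using h1 i (fun h => hi (congrArg Fin.val h))

lemma mem_goodCodes_iff (π : Perm (Fin n)) :
    (¬ Contains123 π ∧ ∃! t, IsOccurrence132 π t) ↔ largerAfterCode π ∈ goodCodes := by
  simp only [not_contains123_and_existsUnique_iff, exists_largerAfter_eq_pair_iff, goodCodes,
    mem_biUnion, mem_univ, true_and, largerAfterCode_mem_piFinset_allowedEntries]

lemma card_allowedEntries (i₀ : ℕ) (i : Fin n) :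
    #(allowedEntries i₀ i) = if (i : ℕ) = i₀ then (if i₀ < n - 2 then 1 else 0)
      else if (i : ℕ) = i₀ + 1 then 1 else min (n - i) 2 := by
  have := i.isLt
  unfold allowedEntries
  by_cases h₀ : (i : ℕ) = i₀
  · simp only [if_pos h₀, Fin.card_filter_val_eq]
    split_ifs <;> omega
  by_cases h₁ : (i : ℕ) = i₀ + 1
  · simp only [if_neg h₀, if_pos h₁, Fin.card_filter_val_lt]
    omega
  · simp only [if_neg h₀, if_neg h₁, Fin.card_filter_val_lt]

lemma card_piFinset_allowedEntries {i₀ : ℕ} (hi₀ : i₀ < n) :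
    #(Fintype.piFinset (allowedEntries (n := n) i₀)) = if i₀ < n - 2 then 2 ^ (n - 3) else 0 := by
  rw [Fintype.card_piFinset]
  simp_rw [card_allowedEntries]
  rw [Fin.prod_univ_eq_prod_range (fun i => if i = i₀ then (if i₀ < n - 2 then 1 else 0)
      else if i = i₀ + 1 then 1 else min (n - i) 2)]
  split_ifs with h
  -- positions `i₀`, `i₀ + 1` and `n - 1` admit one entry each, all others two
  · have hT : {i₀, i₀ + 1, n - 1} ⊆ range n := by
      intro i; simp; omega
    rw [← prod_sdiff hT, prod_eq_pow_card (b := 2), prod_eq_one, mul_one,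
      card_sdiff_of_subset hT, card_range]
    · rw [card_insert_of_notMem (by simp; omega), card_pair (by omega)]
    · intro i hi
      simp only [mem_insert, mem_singleton] at hi
      split_ifs <;> omega
    · intro i hi
      simp only [mem_sdiff, mem_range, mem_insert, mem_singleton, not_or] at hi
      rw [if_neg hi.2.1, if_neg hi.2.2.1]
      omega
  · exact prod_eq_zero (mem_range.2 hi₀) (by simp)

lemma card_goodCodes : #(goodCodes (n := n)) = (n - 2) * 2 ^ (n - 3) := by
  rw [goodCodes, card_biUnion, sum_congr rfl fun i₀ _ => card_piFinset_allowedEntries i₀.isLt,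
    ← sum_filter, sum_const, Fin.card_filter_val_lt, smul_eq_mul]
  · congr; omega
  · intro x _ y _ hxy
    refine disjoint_left.2 fun c hx hy => ?_
    have h2 := Fintype.mem_piFinset.1 hx x
    have h1 := Fintype.mem_piFinset.1 hy x
    have hne : (x : ℕ) ≠ y := Fin.val_ne_of_ne hxy
    simp only [allowedEntries, if_pos, if_neg hne, mem_filter] at h1 h2
    split_ifs at h1 <;> simp at h1 <;> omega

end Equiv.Perm

theorem stmt8_general (n : ℕ) :
    Nat.card {π : Equiv.Perm (Fin n) //
      (¬ ∃ i j k : Fin n, i < j ∧ j < k ∧ π i < π j ∧ π j < π k) ∧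
      (∃! t : Fin n × Fin n × Fin n,
        t.1 < t.2.1 ∧ t.2.1 < t.2.2 ∧ π t.1 < π t.2.2 ∧ π t.2.2 < π t.2.1)} =
    (n - 2) * 2 ^ (n - 3) := by
  rw [← Equiv.Perm.card_goodCodes, ← Nat.card_eq_finsetCard]
  exact Nat.card_congr <| (Equiv.ofBijective _ Equiv.Perm.largerAfterCode_bijective).subtypeEquiv
    Equiv.Perm.mem_goodCodes_iff

/-- For `n ≥ 3`, the number of permutations of length `n` avoiding the pattern 123
and containing exactly one occurrence of the pattern 132 is `(n-2)·2^(n-3)`. -/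
theorem stmt8 (n : ℕ) (hn : 3 ≤ n) :
    Nat.card {π : Equiv.Perm (Fin n) //
      (¬ ∃ i j k : Fin n, i < j ∧ j < k ∧ π i < π j ∧ π j < π k) ∧
      (∃! t : Fin n × Fin n × Fin n,
        t.1 < t.2.1 ∧ t.2.1 < t.2.2 ∧ π t.1 < π t.2.2 ∧ π t.2.2 < π t.2.1)} =
    (n - 2) * 2 ^ (n - 3) :=
  stmt8_general n
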